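/- arXiv:1309.6693 — 3 statements merged into one kernel-verified Lean document; each statement's English description precedes it below -/
import Mathlib

section
/- Along the system error dynamics and the update law, the Lyapunov function is nonincreasing with derivative d/dt V(e(t), W̃(t)) = −e(t)ᵀ R e(t) ≤ 0 for all t ≥ 0. -/
open Matrix Filter

noncomputable section

/-- Euclidean norm ‖·‖₂ of a vector. -/
def norm2 {n : ℕ} (v : Fin n → ℝ) : ℝ := Real.sqrt (∑ i, v i ^ 2)

/-- Supremum (infinity) norm ‖·‖_∞ of a vector (the sup norm on `Fin n → ℝ`). -/
def normInf {n : ℕ} (v : Fin n → ℝ) : ℝ := ‖v‖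

/-- Frobenius norm ‖·‖_F of a matrix. -/
def normF {N m : ℕ} (W : Matrix (Fin N) (Fin m) ℝ) : ℝ := Real.sqrt (∑ i, ∑ j, W i j ^ 2)

/-- Smallest eigenvalue λ_min of a real symmetric (Hermitian) matrix. -/
def lamMin {n : ℕ} {A : Matrix (Fin n) (Fin n) ℝ} (hA : A.IsHermitian) : ℝ := ⨅ i, hA.eigenvalues i

/-- Largest eigenvalue λ_max of a real symmetric (Hermitian) matrix. -/
def lamMax {n : ℕ} {A : Matrix (Fin n) (Fin n) ℝ} (hA : A.IsHermitian) : ℝ := ⨆ i, hA.eigenvalues i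

/-- A real square matrix is Hurwitz if every (complex) eigenvalue has negative real part. -/
def Hurwitz {n : ℕ} (A : Matrix (Fin n) (Fin n) ℝ) : Prop :=
  ∀ μ : ℂ, (A.map Complex.ofReal).charpoly.IsRoot μ → μ.re < 0

/-- The Lyapunov function V(e, W̃) = eᵀ P e + γ⁻¹ tr((W̃ Λ^{1/2})ᵀ (W̃ Λ^{1/2})). -/
def Vlyap {n N m : ℕ} (γ : ℝ) (P : Matrix (Fin n) (Fin n) ℝ)
    (Lhalf : Matrix (Fin m) (Fin m) ℝ) (e : Fin n → ℝ) (W : Matrix (Fin N) (Fin m) ℝ) : ℝ :=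
  e ⬝ᵥ (P *ᵥ e) + γ⁻¹ * ((W * Lhalf)ᵀ * (W * Lhalf)).trace

/-- The augmented Lyapunov function V* of Theorem 5.1. -/
def Vstar {n N m : ℕ} (γ κ η ξ : ℝ) (P R : Matrix (Fin n) (Fin n) ℝ)
    (hP : P.IsHermitian) (hR : R.IsHermitian)
    (Lhalf : Matrix (Fin m) (Fin m) ℝ)
    (e : Fin n → ℝ) (W : Matrix (Fin N) (Fin m) ℝ) (eL xt : Fin n → ℝ) : ℝ :=
  Vlyap γ P Lhalf e W + η⁻¹ * κ * (eL ⬝ᵥ (P *ᵥ eL))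
    + 2 * ξ * κ⁻¹ * (lamMax hP)⁻¹ * lamMin hR * (xt ⬝ᵥ (P *ᵥ xt))

/-!
Writing the rows of `W̃` as `wᵢ`, symmetry of `Λ^{1/2}` turns the trace term of `V` into
`γ⁻¹ ∑ᵢ wᵢᵀ Λ wᵢ`, so `V` is a sum of quadratic forms in `e` and the `wᵢ`. Differentiating, the
Lyapunov equation turns `2 (A_r e)ᵀ P e` into `-eᵀ R e`, and the update law `ẇᵢ = γ σᵢ Bᵀ P e`
makes the trace term contribute `2 eᵀ P B Λ W̃ᵀ σ`, which cancels the cross term coming from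
`ė`.
-/

namespace Matrix

variable {ι κ : Type*} [Fintype ι] {t : ℝ}

theorem hasDerivAt_dotProduct {u v : ℝ → ι → ℝ} {u' v' : ι → ℝ}
    (hu : HasDerivAt u u' t) (hv : HasDerivAt v v' t) :
    HasDerivAt (fun s => u s ⬝ᵥ v s) (u' ⬝ᵥ v t + u t ⬝ᵥ v') t := by
  have := HasDerivAt.fun_sum (u := Finset.univ) fun i _ =>
    (hasDerivAt_pi.mp hu i).fun_mul (hasDerivAt_pi.mp hv i)
  simpa only [dotProduct, Finset.sum_add_distrib] using this

theorem hasDerivAt_mulVec (A : Matrix κ ι ℝ) {v : ℝ → ι → ℝ} {v' : ι → ℝ}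
    (hv : HasDerivAt v v' t) : HasDerivAt (fun s => A *ᵥ v s) (A *ᵥ v') t :=
  hasDerivAt_pi.mpr fun k => by
    simpa [mulVec] using hasDerivAt_dotProduct (hasDerivAt_const t (A k)) hv

theorem hasDerivAt_dotProduct_mulVec_self {M : Matrix ι ι ℝ} (hM : Mᵀ = M)
    {v : ℝ → ι → ℝ} {v' : ι → ℝ} (hv : HasDerivAt v v' t) :
    HasDerivAt (fun s => v s ⬝ᵥ (M *ᵥ v s)) (2 * (v' ⬝ᵥ (M *ᵥ v t))) t := by
  convert hasDerivAt_dotProduct hv (hasDerivAt_mulVec M hv) using 1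
  rw [dotProduct_comm (v t), dotProduct_mulVec, ← mulVec_transpose, hM]
  ring

theorem trace_transpose_mul_self_mul [Fintype κ] (W : Matrix κ ι ℝ) {L : Matrix ι ι ℝ}
    (hL : Lᵀ = L) : ((W * L)ᵀ * (W * L)).trace = ∑ k, W k ⬝ᵥ ((L * L) *ᵥ W k) := by
  rw [trace_mul_comm, transpose_mul, hL, ← Matrix.mul_assoc, Matrix.mul_assoc W]
  refine Finset.sum_congr rfl fun k _ => ?_
  rw [diag_apply, mul_apply, dotProduct_mulVec]
  rfl

theorem two_mul_mulVec_dotProduct_of_lyapunov {A P R : Matrix ι ι ℝ} (hP : Pᵀ = P)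
    (hLyap : Aᵀ * P + P * A + R = 0) (x : ι → ℝ) :
    2 * ((A *ᵥ x) ⬝ᵥ (P *ᵥ x)) = -(x ⬝ᵥ (R *ᵥ x)) := by
  have hAP : x ⬝ᵥ ((Aᵀ * P) *ᵥ x) = (A *ᵥ x) ⬝ᵥ (P *ᵥ x) := by
    rw [← mulVec_mulVec, dotProduct_mulVec, ← mulVec_transpose, transpose_transpose]
  have hPA : x ⬝ᵥ ((P * A) *ᵥ x) = (A *ᵥ x) ⬝ᵥ (P *ᵥ x) := by
    rw [← mulVec_mulVec, dotProduct_comm, dotProduct_mulVec, ← mulVec_transpose, hP]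
  rw [eq_neg_of_add_eq_zero_right hLyap, neg_mulVec, dotProduct_neg, add_mulVec,
    dotProduct_add, hAP, hPA]
  ring

theorem sum_dotProduct_mulVec_row [Fintype κ] (c : ℝ) (σ : κ → ℝ) (v : ι → ℝ)
    (M : Matrix ι ι ℝ) (W : Matrix κ ι ℝ) :
    ∑ k, (fun j => c * (σ k * v j)) ⬝ᵥ (M *ᵥ W k) = c * (v ⬝ᵥ (M *ᵥ (Wᵀ *ᵥ σ))) := by
  simp only [dotProduct, mulVec, transpose_apply, Finset.mul_sum]
  rw [Finset.sum_comm]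
  refine Finset.sum_congr rfl fun j _ => ?_
  rw [Finset.sum_comm]
  exact Finset.sum_congr rfl fun _ _ => Finset.sum_congr rfl fun _ _ => by ring

theorem mul_mul_transpose_mulVec_dotProduct {ν μ : Type*} [Fintype ν] [Fintype μ] [Fintype κ]
    {P : Matrix ν ν ℝ} (hP : Pᵀ = P) (B : Matrix ν μ ℝ) (L : Matrix μ μ ℝ)
    (W : Matrix κ μ ℝ) (σ : κ → ℝ) (x : ν → ℝ) :
    ((B * L * Wᵀ) *ᵥ σ) ⬝ᵥ (P *ᵥ x) = (x ᵥ* (P * B)) ⬝ᵥ (L *ᵥ (Wᵀ *ᵥ σ)) := by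
  rw [dotProduct_comm, ← mulVec_mulVec, ← mulVec_mulVec, dotProduct_mulVec, ← vecMul_vecMul,
    ← mulVec_transpose (A := P), hP]

end Matrix

theorem statement0_general
    {n N m : ℕ}
    (Ar : Matrix (Fin n) (Fin n) ℝ) (B : Matrix (Fin n) (Fin m) ℝ)
    (Lam Lhalf : Matrix (Fin m) (Fin m) ℝ) (R P : Matrix (Fin n) (Fin n) ℝ)
    (hLhalfDiag : Lhalf.IsDiag) (hLhalfSq : Lhalf * Lhalf = Lam)
    (hR : R.PosDef) (hP : P.PosDef)
    (hLyap : Arᵀ * P + P * Ar + R = 0)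
    (γ : ℝ) (hγ : 0 < γ)
    (σx : ℝ → Fin N → ℝ)
    (e : ℝ → Fin n → ℝ) (Wt : ℝ → Matrix (Fin N) (Fin m) ℝ)
    (he : ∀ t ≥ (0:ℝ), HasDerivAt e (Ar *ᵥ e t - (B * Lam * (Wt t)ᵀ) *ᵥ σx t) t)
    (hW : ∀ t ≥ (0:ℝ), ∀ i j, HasDerivAt (fun s => Wt s i j)
          (γ * (σx t i * ((e t) ᵥ* (P * B)) j)) t)
    : ∀ t ≥ (0:ℝ),
      HasDerivAt (fun s => Vlyap γ P Lhalf (e s) (Wt s)) (-(e t ⬝ᵥ (R *ᵥ e t))) t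
      ∧ -(e t ⬝ᵥ (R *ᵥ e t)) ≤ 0 := by
  intro t ht
  have hPsymm : Pᵀ = P := hP.isHermitian
  have hLhalfSymm : Lhalfᵀ = Lhalf := hLhalfDiag.isSymm
  have hLamSymm : Lamᵀ = Lam := by rw [← hLhalfSq, transpose_mul, hLhalfSymm]
  have hV : (fun s => Vlyap γ P Lhalf (e s) (Wt s))
      = fun s => e s ⬝ᵥ (P *ᵥ e s) + γ⁻¹ * ∑ i, Wt s i ⬝ᵥ (Lam *ᵥ Wt s i) := by
    funext s
    rw [Vlyap, trace_transpose_mul_self_mul _ hLhalfSymm, hLhalfSq]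
  refine ⟨?_, neg_nonpos.mpr (hR.posSemidef.dotProduct_mulVec_nonneg _)⟩
  rw [hV]
  refine ((hasDerivAt_dotProduct_mulVec_self hPsymm (he t ht)).fun_add
    ((HasDerivAt.fun_sum (u := Finset.univ) fun i _ => hasDerivAt_dotProduct_mulVec_self
      hLamSymm (hasDerivAt_pi.mpr (hW t ht i))).const_mul γ⁻¹)).congr_deriv ?_
  rw [← Finset.mul_sum, sum_dotProduct_mulVec_row, sub_dotProduct,
    mul_mul_transpose_mulVec_dotProduct hPsymm, mul_sub,
    two_mul_mulVec_dotProduct_of_lyapunov hPsymm hLyap]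
  field_simp
  ring

theorem statement0
    {n N m : ℕ} (hn : 0 < n) (hN : 0 < N) (hm : 0 < m)
    (Ar : Matrix (Fin n) (Fin n) ℝ) (B : Matrix (Fin n) (Fin m) ℝ)
    (Lam Lhalf : Matrix (Fin m) (Fin m) ℝ) (R P : Matrix (Fin n) (Fin n) ℝ)
    (hAr : Hurwitz Ar)
    (hLam : Lam.PosDef) (hLamDiag : Lam.IsDiag)
    (hLhalfDiag : Lhalf.IsDiag) (hLhalfSq : Lhalf * Lhalf = Lam)
    (hR : R.PosDef) (hP : P.PosDef)
    (hLyap : Arᵀ * P + P * Ar + R = 0)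
    (γ : ℝ) (hγ : 0 < γ)
    (σx : ℝ → Fin N → ℝ)
    (e : ℝ → Fin n → ℝ) (Wt : ℝ → Matrix (Fin N) (Fin m) ℝ)
    (he : ∀ t ≥ (0:ℝ), HasDerivAt e (Ar *ᵥ e t - (B * Lam * (Wt t)ᵀ) *ᵥ σx t) t)
    (hW : ∀ t ≥ (0:ℝ), ∀ i j, HasDerivAt (fun s => Wt s i j)
          (γ * (σx t i * ((e t) ᵥ* (P * B)) j)) t)
    : ∀ t ≥ (0:ℝ),
      HasDerivAt (fun s => Vlyap γ P Lhalf (e s) (Wt s)) (-(e t ⬝ᵥ (R *ᵥ e t))) t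
      ∧ -(e t ⬝ᵥ (R *ᵥ e t)) ≤ 0 :=
  statement0_general Ar B Lam Lhalf R P hLhalfDiag hLhalfSq hR hP hLyap γ hγ σx e Wt he hW
end
end

section
/- (Remark 3.1) If e(0) = 0, then the system error satisfies the uniform transient bound sup_{t ≥ 0} ‖e(t)‖_∞ ≤ ‖W̃(0) Λ^{1/2}‖_F / √(γ λ_min(P)); in particular, the bound tends to 0 as the learning rate γ → ∞. -/
open Matrix Filter

noncomputable section

/-! Along solutions the Lyapunov function `V(t) = Vlyap γ P Λ^{1/2} (e t) (W̃ t)` has derivative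
`-eᵀ R e ≤ 0`: by the Lyapunov equation the error dynamics contribute `-eᵀ R e - 2 eᵀ P B Λ W̃ᵀ σ`,
and the update law contributes exactly `+2 eᵀ P B Λ W̃ᵀ σ`. So `V(t) ≤ V(0) = ‖W̃(0) Λ^{1/2}‖_F² / γ`
when `e(0) = 0`, while `λ_min(P) ‖e‖_∞² ≤ λ_min(P) ‖e‖₂² ≤ eᵀ P e ≤ V(t)`. -/

lemma Matrix.IsHermitian.posSemidef_sub_smul_one {ι : Type*} [Fintype ι] [DecidableEq ι]
    {A : Matrix ι ι ℝ} (hA : A.IsHermitian) {c : ℝ} (hc : ∀ i, c ≤ hA.eigenvalues i) :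
    (A - c • 1).PosSemidef := by
  have hshift : (diagonal fun i => hA.eigenvalues i - c) = diagonal hA.eigenvalues - c • 1 := by
    rw [← diagonal_one, ← diagonal_smul, diagonal_sub]
    simp
  have hdiag : A - c • 1 = Unitary.conjStarAlgAut ℝ _ hA.eigenvectorUnitary
      (diagonal fun i => hA.eigenvalues i - c) := by
    rw [hshift, map_sub, map_smul, map_one]
    congr
    exact hA.spectral_theorem
  rw [hdiag, Unitary.conjStarAlgAut_apply, Unitary.isUnit_coe.posSemidef_star_right_conjugate_iff,
    posSemidef_diagonal_iff]
  exact fun i => sub_nonneg.2 (hc i)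

lemma Matrix.IsHermitian.lamMin_mul_dotProduct_self_le {n : ℕ} {A : Matrix (Fin n) (Fin n) ℝ}
    (hA : A.IsHermitian) (x : Fin n → ℝ) : lamMin hA * (x ⬝ᵥ x) ≤ x ⬝ᵥ A *ᵥ x := by
  have := (hA.posSemidef_sub_smul_one fun i =>
    ciInf_le (Set.finite_range _).bddBelow i).dotProduct_mulVec_nonneg x
  simp only [star_trivial, sub_mulVec, dotProduct_sub, smul_mulVec, one_mulVec, dotProduct_smul,
    smul_eq_mul, sub_nonneg] at this
  exact this

lemma Matrix.PosDef.lamMin_pos {n : ℕ} {A : Matrix (Fin n) (Fin n) ℝ} (hA : A.PosDef)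
    (hn : 0 < n) : 0 < lamMin hA.1 := by
  have : Nonempty (Fin n) := ⟨⟨0, hn⟩⟩
  obtain ⟨i, hi⟩ := exists_eq_ciInf_of_finite (f := hA.1.eigenvalues)
  rw [lamMin, ← hi]
  exact hA.eigenvalues_pos i

lemma Matrix.trace_transpose_mul_self_eq_normF_sq {N m : ℕ} (M : Matrix (Fin N) (Fin m) ℝ) :
    (Mᵀ * M).trace = normF M ^ 2 := by
  rw [normF, Real.sq_sqrt (by positivity), Finset.sum_comm]
  simp only [trace, diag, mul_apply, transpose_apply, sq]

lemma normInf_le_sqrt_dotProduct_self {n : ℕ} (v : Fin n → ℝ) : normInf v ≤ √(v ⬝ᵥ v) :=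
  (pi_norm_le_iff_of_nonneg (Real.sqrt_nonneg _)).2 fun i => by
    rw [Real.norm_eq_abs]
    exact Real.abs_le_sqrt (by
      simpa only [dotProduct, sq] using Finset.single_le_sum (fun j _ => mul_self_nonneg (v j))
        (Finset.mem_univ i))

section Algebra

variable {ι κ μ : Type*} [Fintype ι] [Fintype κ] [Fintype μ]

lemma Matrix.dotProduct_mulVec_comm_of_transpose_eq {P : Matrix ι ι ℝ} (hP : Pᵀ = P)
    (x y : ι → ℝ) : y ⬝ᵥ P *ᵥ x = x ⬝ᵥ P *ᵥ y := by
  rw [dotProduct_mulVec, ← mulVec_transpose, hP, dotProduct_comm]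

omit [Fintype ι] in
lemma Matrix.trace_transpose_mul_vecMulVec_mul {W : Matrix κ μ ℝ} {L Λ : Matrix μ μ ℝ}
    (hL : L * Lᵀ = Λ) (σ : κ → ℝ) (u : μ → ℝ) :
    ((W * L)ᵀ * (vecMulVec σ u * L)).trace = u ⬝ᵥ (Λ * Wᵀ) *ᵥ σ := by
  rw [transpose_mul, trace_mul_comm, Matrix.mul_assoc, ← Matrix.mul_assoc L, hL, vecMulVec_mul,
    trace_vecMulVec, dotProduct_comm, dotProduct_mulVec]

lemma lyapunov_quadraticForm_deriv {A P R : Matrix ι ι ℝ} (hP : Pᵀ = P)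
    (hLyap : Aᵀ * P + P * A + R = 0) (x d : ι → ℝ) :
    (A *ᵥ x - d) ⬝ᵥ P *ᵥ x + x ⬝ᵥ P *ᵥ (A *ᵥ x - d) = -(x ⬝ᵥ R *ᵥ x) - 2 * (x ⬝ᵥ P *ᵥ d) := by
  have hR : R = -(Aᵀ * P + P * A) := eq_neg_of_add_eq_zero_right hLyap
  have hAP : (A *ᵥ x) ⬝ᵥ P *ᵥ x = x ⬝ᵥ (Aᵀ * P) *ᵥ x := by
    rw [← vecMul_transpose, ← dotProduct_mulVec, mulVec_mulVec]
  rw [sub_dotProduct, mulVec_sub, dotProduct_sub, hAP, mulVec_mulVec,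
    dotProduct_mulVec_comm_of_transpose_eq hP x d, hR, neg_mulVec, add_mulVec, dotProduct_neg,
    dotProduct_add]
  ring

end Algebra

section Derivatives

variable {ι κ : Type*} [Fintype ι] [Fintype κ] {t : ℝ}

lemma hasDerivAt_dotProduct_mulVec_self {x : ℝ → ι → ℝ} {x' : ι → ℝ}
    (A : Matrix ι ι ℝ) (hx : HasDerivAt x x' t) :
    HasDerivAt (fun s => x s ⬝ᵥ A *ᵥ x s) (x' ⬝ᵥ A *ᵥ x t + x t ⬝ᵥ A *ᵥ x') t := by
  have hxi := hasDerivAt_pi.1 hx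
  have h := HasDerivAt.fun_sum (u := Finset.univ) fun i _ => (hxi i).fun_mul
    (HasDerivAt.fun_sum (u := Finset.univ) fun j _ => (hxi j).const_mul (A i j))
  simpa only [dotProduct, mulVec, Finset.sum_add_distrib] using h

lemma hasDerivAt_trace_transpose_mul_self {M : ℝ → Matrix ι κ ℝ} {M' : Matrix ι κ ℝ}
    (hM : ∀ i j, HasDerivAt (fun s => M s i j) (M' i j) t) :
    HasDerivAt (fun s => ((M s)ᵀ * M s).trace) (2 * ((M t)ᵀ * M').trace) t := by
  have h := HasDerivAt.fun_sum (u := Finset.univ) fun j _ =>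
    HasDerivAt.fun_sum (u := Finset.univ) fun i _ => (hM i j).fun_mul (hM i j)
  simp only [trace, diag, mul_apply, transpose_apply, Finset.mul_sum]
  refine h.congr_deriv (Finset.sum_congr rfl fun j _ => Finset.sum_congr rfl fun i _ => ?_)
  ring

omit [Fintype ι] in
lemma hasDerivAt_mul_apply {W : ℝ → Matrix ι κ ℝ} {W' : Matrix ι κ ℝ} (L : Matrix κ κ ℝ)
    (hW : ∀ i j, HasDerivAt (fun s => W s i j) (W' i j) t) (i : ι) (j : κ) :
    HasDerivAt (fun s => (W s * L) i j) ((W' * L) i j) t := by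
  simp only [mul_apply]
  exact HasDerivAt.fun_sum fun k _ => (hW i k).mul_const (L k j)

omit [Fintype ι] [Fintype κ] in
lemma antitoneOn_Ici_of_hasDerivAt_nonpos {f f' : ℝ → ℝ} {a : ℝ}
    (hf : ∀ t ≥ a, HasDerivAt f (f' t) t) (hf' : ∀ t ≥ a, f' t ≤ 0) : AntitoneOn f (Set.Ici a) :=
  antitoneOn_of_hasDerivWithinAt_nonpos (convex_Ici a)
    (fun t ht => (hf t ht).continuousAt.continuousWithinAt)
    (fun t ht => (hf t (interior_subset ht)).hasDerivWithinAt)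
    (fun t ht => hf' t (interior_subset ht))

end Derivatives

section Lyapunov

variable {n N m : ℕ}

lemma hasDerivAt_Vlyap (γ : ℝ) (P : Matrix (Fin n) (Fin n) ℝ) (L : Matrix (Fin m) (Fin m) ℝ)
    {x : ℝ → Fin n → ℝ} {x' : Fin n → ℝ} {W : ℝ → Matrix (Fin N) (Fin m) ℝ}
    {W' : Matrix (Fin N) (Fin m) ℝ} {t : ℝ}
    (hx : HasDerivAt x x' t) (hW : ∀ i j, HasDerivAt (fun s => W s i j) (W' i j) t) :
    HasDerivAt (fun s => Vlyap γ P L (x s) (W s))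
      (x' ⬝ᵥ P *ᵥ x t + x t ⬝ᵥ P *ᵥ x' + γ⁻¹ * (2 * ((W t * L)ᵀ * (W' * L)).trace)) t :=
  (hasDerivAt_dotProduct_mulVec_self P hx).add
    ((hasDerivAt_trace_transpose_mul_self (hasDerivAt_mul_apply L hW)).const_mul γ⁻¹)

lemma Vlyap_deriv_eq_neg_of_lyapunov {γ : ℝ} {A P R : Matrix (Fin n) (Fin n) ℝ}
    {B : Matrix (Fin n) (Fin m) ℝ} {L Λ : Matrix (Fin m) (Fin m) ℝ}
    (hP : Pᵀ = P) (hLyap : Aᵀ * P + P * A + R = 0) (hL : L * Lᵀ = Λ) (hγ : γ ≠ 0)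
    (x : Fin n → ℝ) (σ : Fin N → ℝ) (W : Matrix (Fin N) (Fin m) ℝ) :
    (A *ᵥ x - (B * Λ * Wᵀ) *ᵥ σ) ⬝ᵥ P *ᵥ x + x ⬝ᵥ P *ᵥ (A *ᵥ x - (B * Λ * Wᵀ) *ᵥ σ)
      + γ⁻¹ * (2 * ((W * L)ᵀ * ((γ • vecMulVec σ (x ᵥ* (P * B))) * L)).trace)
      = -(x ⬝ᵥ R *ᵥ x) := by
  have hcross : (x ᵥ* (P * B)) ⬝ᵥ (Λ * Wᵀ) *ᵥ σ = x ⬝ᵥ P *ᵥ ((B * Λ * Wᵀ) *ᵥ σ) := by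
    simp only [← dotProduct_mulVec, mulVec_mulVec, Matrix.mul_assoc]
  rw [lyapunov_quadraticForm_deriv hP hLyap, smul_mul, Matrix.mul_smul, trace_smul,
    trace_transpose_mul_vecMulVec_mul hL, hcross, smul_eq_mul]
  field_simp
  ring

lemma normInf_le_of_Vlyap_le {γ F : ℝ} {P : Matrix (Fin n) (Fin n) ℝ}
    {L : Matrix (Fin m) (Fin m) ℝ} {x : Fin n → ℝ} {W : Matrix (Fin N) (Fin m) ℝ}
    (hP : P.PosDef) (hn : 0 < n) (hγ : 0 < γ) (hF : 0 ≤ F) (hV : Vlyap γ P L x W ≤ F ^ 2 / γ) :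
    normInf x ≤ F / √(γ * lamMin hP.1) := by
  have hc := hP.lamMin_pos hn
  have hquad : x ⬝ᵥ P *ᵥ x ≤ Vlyap γ P L x W := by
    rw [Vlyap, trace_transpose_mul_self_eq_normF_sq]
    have : 0 ≤ γ⁻¹ * normF (W * L) ^ 2 := by positivity
    linarith
  have hxx : x ⬝ᵥ x ≤ F ^ 2 / (γ * lamMin hP.1) := by
    rw [le_div_iff₀ (by positivity)]
    nlinarith [hP.1.lamMin_mul_dotProduct_self_le x, mul_div_cancel₀ (F ^ 2) hγ.ne']
  calc normInf x ≤ √(x ⬝ᵥ x) := normInf_le_sqrt_dotProduct_self x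
    _ ≤ √(F ^ 2 / (γ * lamMin hP.1)) := Real.sqrt_le_sqrt hxx
    _ = F / √(γ * lamMin hP.1) := by rw [Real.sqrt_div' _ (by positivity), Real.sqrt_sq hF]

end Lyapunov

theorem statement2_general
    {n N m : ℕ} (hn : 0 < n)
    (Ar : Matrix (Fin n) (Fin n) ℝ) (B : Matrix (Fin n) (Fin m) ℝ)
    (Lam Lhalf : Matrix (Fin m) (Fin m) ℝ) (R P : Matrix (Fin n) (Fin n) ℝ)
    (hLhalfDiag : Lhalf.IsDiag) (hLhalfSq : Lhalf * Lhalf = Lam)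
    (hR : R.PosDef) (hP : P.PosDef)
    (hLyap : Arᵀ * P + P * Ar + R = 0)
    (γ : ℝ) (hγ : 0 < γ)
    (σx : ℝ → Fin N → ℝ)
    (e : ℝ → Fin n → ℝ) (Wt : ℝ → Matrix (Fin N) (Fin m) ℝ)
    (he : ∀ t ≥ (0:ℝ), HasDerivAt e (Ar *ᵥ e t - (B * Lam * (Wt t)ᵀ) *ᵥ σx t) t)
    (hW : ∀ t ≥ (0:ℝ), ∀ i j, HasDerivAt (fun s => Wt s i j)
          (γ * (σx t i * ((e t) ᵥ* (P * B)) j)) t)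
    (he0 : e 0 = 0)
    : (∀ t ≥ (0:ℝ), normInf (e t) ≤ normF (Wt 0 * Lhalf) / Real.sqrt (γ * lamMin hP.1))
      ∧ Tendsto (fun g : ℝ => normF (Wt 0 * Lhalf) / Real.sqrt (g * lamMin hP.1))
          atTop (nhds 0) := by
  have hPt : Pᵀ = P := by rw [← conjTranspose_eq_transpose_of_trivial]; exact hP.1
  have hL : Lhalf * Lhalfᵀ = Lam := by rw [hLhalfDiag.isSymm.eq, hLhalfSq]
  set V : ℝ → ℝ := fun s => Vlyap γ P Lhalf (e s) (Wt s)
  have hV' : ∀ t ≥ (0:ℝ), HasDerivAt V (-(e t ⬝ᵥ R *ᵥ e t)) t := fun t ht => by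
    have := hasDerivAt_Vlyap γ P Lhalf (W' := γ • vecMulVec (σx t) (e t ᵥ* (P * B)))
      (he t ht) (hW t ht)
    rwa [Vlyap_deriv_eq_neg_of_lyapunov hPt hLyap hL hγ.ne'] at this
  have hVanti : AntitoneOn V (Set.Ici 0) := antitoneOn_Ici_of_hasDerivAt_nonpos hV'
    fun t _ => neg_nonpos.2 (by simpa using hR.posSemidef.dotProduct_mulVec_nonneg (e t))
  have hV0 : V 0 = normF (Wt 0 * Lhalf) ^ 2 / γ := by
    simp only [V, Vlyap, he0, zero_dotProduct, trace_transpose_mul_self_eq_normF_sq]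
    ring
  refine ⟨fun t ht => ?_, ?_⟩
  · have hVt : V t ≤ normF (Wt 0 * Lhalf) ^ 2 / γ := hV0 ▸ hVanti Set.self_mem_Ici ht ht
    exact normInf_le_of_Vlyap_le hP hn hγ (Real.sqrt_nonneg _) hVt
  · exact tendsto_const_nhds.div_atTop
      (Real.tendsto_sqrt_atTop.comp (tendsto_id.atTop_mul_const (hP.lamMin_pos hn)))

theorem statement2
    {n N m : ℕ} (hn : 0 < n) (hN : 0 < N) (hm : 0 < m)
    (Ar : Matrix (Fin n) (Fin n) ℝ) (B : Matrix (Fin n) (Fin m) ℝ)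
    (Lam Lhalf : Matrix (Fin m) (Fin m) ℝ) (R P : Matrix (Fin n) (Fin n) ℝ)
    (hAr : Hurwitz Ar)
    (hLam : Lam.PosDef) (hLamDiag : Lam.IsDiag)
    (hLhalfDiag : Lhalf.IsDiag) (hLhalfSq : Lhalf * Lhalf = Lam)
    (hR : R.PosDef) (hP : P.PosDef)
    (hLyap : Arᵀ * P + P * Ar + R = 0)
    (γ : ℝ) (hγ : 0 < γ)
    (σx : ℝ → Fin N → ℝ)
    (e : ℝ → Fin n → ℝ) (Wt : ℝ → Matrix (Fin N) (Fin m) ℝ)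
    (he : ∀ t ≥ (0:ℝ), HasDerivAt e (Ar *ᵥ e t - (B * Lam * (Wt t)ᵀ) *ᵥ σx t) t)
    (hW : ∀ t ≥ (0:ℝ), ∀ i j, HasDerivAt (fun s => Wt s i j)
          (γ * (σx t i * ((e t) ᵥ* (P * B)) j)) t)
    (he0 : e 0 = 0)
    : (∀ t ≥ (0:ℝ), normInf (e t) ≤ normF (Wt 0 * Lhalf) / Real.sqrt (γ * lamMin hP.1))
      ∧ Tendsto (fun g : ℝ => normF (Wt 0 * Lhalf) / Real.sqrt (g * lamMin hP.1))
          atTop (nhds 0) :=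
  statement2_general hn Ar B Lam Lhalf R P hLhalfDiag hLhalfSq hR hP hLyap γ hγ σx e Wt he hW he0
end
end

section
/- (Derivative identity in the proof of Theorem 5.1) Along the modified error dynamics, for all t ≥ 0, d/dt V*(e(t), W̃(t), e_L(t), x̃(t)) = −e(t)ᵀ R e(t) − η^{-1} κ e_L(t)ᵀ R e_L(t) − 2ξ κ^{-1} λ_max(P)^{-1} λ_min(R) x̃(t)ᵀ R x̃(t) − 2κ e_H(t)ᵀ P e_H(t) + 4ξ λ_max(P)^{-1} λ_min(R) x̃(t)ᵀ P e_H(t), where e_H(t) := e(t) − e_L(t) is the high-frequency content of the system error. -/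
open Matrix Filter

noncomputable section

/-! Along any flow `x' = A_r x + u`, the Lyapunov equation turns the derivative of `xᵀ P x` into
`-xᵀ R x + 2 xᵀ P u`; this handles `e`, `e_L` and `x̃` alike. Writing the weight term as
`vec (W̃ Λ^{1/2}) ⬝ vec (W̃ Λ^{1/2})`, the adaptive law makes its derivative exactly cancel the
cross term `-2 eᵀ P B Λ W̃ᵀ σ` coming from the error dynamics, and the remaining cross terms in
`e_H` combine once the factors `η⁻¹ η` and `κ⁻¹ κ` cancel. -/

namespace Matrix

section Algebra

variable {α ι κ μ : Type*} [Fintype ι]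

theorem IsSymm.dotProduct_mulVec_comm [CommSemiring α] {P : Matrix ι ι α} (hP : P.IsSymm)
    (x y : ι → α) :
    x ⬝ᵥ P *ᵥ y = y ⬝ᵥ P *ᵥ x := by
  rw [dotProduct_mulVec, ← mulVec_transpose, hP.eq, dotProduct_comm]

theorem trace_transpose_mul_vecMulVec_mul_s4 [CommSemiring α] [Fintype κ] [Fintype μ]
    (W : Matrix ι κ α) (L : Matrix κ μ α) (a : ι → α) (b : κ → α) :
    ((W * L)ᵀ * (vecMulVec a b * L)).trace = b ⬝ᵥ (L * Lᵀ * Wᵀ) *ᵥ a := by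
  rw [transpose_mul, Matrix.mul_assoc, trace_mul_comm, Matrix.mul_assoc, Matrix.mul_assoc,
    ← Matrix.mul_assoc, mul_vecMulVec, vecMulVec_mul, trace_vecMulVec, ← mulVec_mulVec,
    dotProduct_mulVec, dotProduct_comm]

theorem two_mul_dotProduct_mulVec_mulVec_of_lyapunov [CommRing α] {A P R : Matrix ι ι α}
    (hP : P.IsSymm) (hLyap : Aᵀ * P + P * A + R = 0) (x : ι → α) :
    2 * (x ⬝ᵥ P *ᵥ (A *ᵥ x)) = -(x ⬝ᵥ R *ᵥ x) := by
  have h := congrArg (fun M => x ⬝ᵥ M *ᵥ x) hLyap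
  simp only [add_mulVec, dotProduct_add, zero_mulVec, dotProduct_zero, ← mulVec_mulVec] at h
  rw [dotProduct_mulVec x Aᵀ, vecMul_transpose, hP.dotProduct_mulVec_comm] at h
  linear_combination h

end Algebra

section Calculus

variable {𝕜 : Type*} [NontriviallyNormedField 𝕜] {ι κ μ : Type*} {t : 𝕜}

theorem _root_.HasDerivAt.dotProduct [Fintype ι] {f g : 𝕜 → ι → 𝕜} {f' g' : ι → 𝕜}
    (hf : HasDerivAt f f' t) (hg : HasDerivAt g g' t) :
    HasDerivAt (fun s => f s ⬝ᵥ g s) (f' ⬝ᵥ g t + f t ⬝ᵥ g') t := by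
  rw [show f' ⬝ᵥ g t + f t ⬝ᵥ g' = ∑ i, (f' i * g t i + f t i * g' i) from
    Finset.sum_add_distrib.symm]
  exact HasDerivAt.fun_sum fun i _ => (hasDerivAt_pi.1 hf i).fun_mul (hasDerivAt_pi.1 hg i)

theorem _root_.HasDerivAt.mulVec [Fintype ι] [Fintype κ] [CompleteSpace 𝕜] (A : Matrix κ ι 𝕜)
    {f : 𝕜 → ι → 𝕜} {f' : ι → 𝕜} (hf : HasDerivAt f f' t) :
    HasDerivAt (fun s => A *ᵥ f s) (A *ᵥ f') t :=
  (mulVecLin A).toContinuousLinearMap.hasFDerivAt.comp_hasDerivAt t hf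

theorem _root_.HasDerivAt.dotProduct_mulVec_self [Fintype ι] [CompleteSpace 𝕜]
    {P : Matrix ι ι 𝕜} (hP : P.IsSymm) {f : 𝕜 → ι → 𝕜} {f' : ι → 𝕜} (hf : HasDerivAt f f' t) :
    HasDerivAt (fun s => f s ⬝ᵥ P *ᵥ f s) (2 * (f t ⬝ᵥ P *ᵥ f')) t :=
  (hf.dotProduct (hf.mulVec P)).congr_deriv (by rw [hP.dotProduct_mulVec_comm]; ring)

theorem _root_.HasDerivAt.dotProduct_mulVec_self_of_lyapunov [Fintype ι] [CompleteSpace 𝕜]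
    {A P R : Matrix ι ι 𝕜} (hP : P.IsSymm) (hLyap : Aᵀ * P + P * A + R = 0)
    {x : 𝕜 → ι → 𝕜} {u : ι → 𝕜} (hx : HasDerivAt x (A *ᵥ x t + u) t) :
    HasDerivAt (fun s => x s ⬝ᵥ P *ᵥ x s) (-(x t ⬝ᵥ R *ᵥ x t) + 2 * (x t ⬝ᵥ P *ᵥ u)) t :=
  (hx.dotProduct_mulVec_self hP).congr_deriv <| by
    rw [mulVec_add, dotProduct_add, mul_add,
      two_mul_dotProduct_mulVec_mulVec_of_lyapunov hP hLyap]

theorem hasDerivAt_vec_mul [Fintype κ] (L : Matrix κ μ 𝕜) {W : 𝕜 → Matrix ι κ 𝕜}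
    {W' : Matrix ι κ 𝕜} (hW : ∀ i j, HasDerivAt (fun s => W s i j) (W' i j) t) :
    HasDerivAt (fun s => vec (W s * L)) (vec (W' * L)) t :=
  hasDerivAt_pi.2 fun ⟨j, i⟩ => HasDerivAt.fun_sum fun k _ => (hW i k).mul_const (L k j)

theorem hasDerivAt_trace_transpose_mul_self [Fintype ι] [Fintype κ] [Fintype μ]
    (L : Matrix κ μ 𝕜) {W : 𝕜 → Matrix ι κ 𝕜} {W' : Matrix ι κ 𝕜}
    (hW : ∀ i j, HasDerivAt (fun s => W s i j) (W' i j) t) :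
    HasDerivAt (fun s => ((W s * L)ᵀ * (W s * L)).trace)
      (2 * ((W t * L)ᵀ * (W' * L)).trace) t := by
  have h := hasDerivAt_vec_mul L hW
  simp_rw [← vec_dotProduct_vec]
  exact (h.dotProduct h).congr_deriv (by rw [dotProduct_comm]; ring)

end Calculus

end Matrix

theorem statement4_general
    {n N m : ℕ}
    (Ar : Matrix (Fin n) (Fin n) ℝ) (B : Matrix (Fin n) (Fin m) ℝ)
    (Lam Lhalf : Matrix (Fin m) (Fin m) ℝ) (R P : Matrix (Fin n) (Fin n) ℝ)
    (hLhalfDiag : Lhalf.IsDiag) (hLhalfSq : Lhalf * Lhalf = Lam)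
    (hR : R.PosDef) (hP : P.PosDef)
    (hLyap : Arᵀ * P + P * Ar + R = 0)
    (γ κ η ξ : ℝ) (hγ : 0 < γ) (hκ : 0 < κ) (hη : 0 < η)
    (σx : ℝ → Fin N → ℝ)
    (e eL xt : ℝ → Fin n → ℝ) (Wt : ℝ → Matrix (Fin N) (Fin m) ℝ)
    (he : ∀ t ≥ (0:ℝ), HasDerivAt e
          (Ar *ᵥ e t - (B * Lam * (Wt t)ᵀ) *ᵥ σx t - κ • (e t - eL t)) t)
    (hW : ∀ t ≥ (0:ℝ), ∀ i j, HasDerivAt (fun s => Wt s i j)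
          (γ * (σx t i * ((e t) ᵥ* (P * B)) j)) t)
    (heL : ∀ t ≥ (0:ℝ), HasDerivAt eL (Ar *ᵥ eL t + η • (e t - eL t)) t)
    (hxt : ∀ t ≥ (0:ℝ), HasDerivAt xt (Ar *ᵥ xt t + κ • (e t - eL t)) t)
    : ∀ t ≥ (0:ℝ),
      HasDerivAt (fun s => Vstar γ κ η ξ P R hP.1 hR.1 Lhalf (e s) (Wt s) (eL s) (xt s))
        (-(e t ⬝ᵥ (R *ᵥ e t)) - η⁻¹ * κ * (eL t ⬝ᵥ (R *ᵥ eL t))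
          - 2 * ξ * κ⁻¹ * (lamMax hP.1)⁻¹ * lamMin hR.1 * (xt t ⬝ᵥ (R *ᵥ xt t))
          - 2 * κ * ((e t - eL t) ⬝ᵥ (P *ᵥ (e t - eL t)))
          + 4 * ξ * (lamMax hP.1)⁻¹ * lamMin hR.1 * (xt t ⬝ᵥ (P *ᵥ (e t - eL t)))) t := by
  intro t ht
  have hPs : P.IsSymm := isHermitian_iff_isSymm.1 hP.isHermitian
  set Φ := (B * Lam * (Wt t)ᵀ) *ᵥ σx t
  have hE := ((he t ht).congr_deriv (show _ = Ar *ᵥ e t + -(Φ + κ • (e t - eL t)) by abel))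
    |>.dotProduct_mulVec_self_of_lyapunov hPs hLyap
  have hEL := (heL t ht).dotProduct_mulVec_self_of_lyapunov hPs hLyap
  have hX := (hxt t ht).dotProduct_mulVec_self_of_lyapunov hPs hLyap
  have hTr := hasDerivAt_trace_transpose_mul_self Lhalf
    (W' := γ • vecMulVec (σx t) (e t ᵥ* (P * B))) (by simpa [vecMulVec_apply] using hW t ht)
  have hAdapt : ((Wt t * Lhalf)ᵀ * (γ • vecMulVec (σx t) (e t ᵥ* (P * B)) * Lhalf)).trace
      = γ * (e t ⬝ᵥ P *ᵥ Φ) := by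
    rw [smul_mul, Matrix.mul_smul, trace_smul, trace_transpose_mul_vecMulVec_mul_s4,
      hLhalfDiag.isSymm.eq, hLhalfSq, smul_eq_mul]
    simp only [Φ, mulVec_mulVec, dotProduct_mulVec, vecMul_vecMul, Matrix.mul_assoc]
  refine (((hE.add (hTr.const_mul γ⁻¹)).add (hEL.const_mul (η⁻¹ * κ))).add
    (hX.const_mul (2 * ξ * κ⁻¹ * (lamMax hP.1)⁻¹ * lamMin hR.1))).congr_deriv ?_
  rw [hAdapt]
  simp only [mulVec_add, mulVec_neg, mulVec_smul, mulVec_sub, dotProduct_add, dotProduct_neg,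
    dotProduct_smul, dotProduct_sub, sub_dotProduct, smul_eq_mul]
  field_simp
  ring

theorem statement4
    {n N m : ℕ} (hn : 0 < n) (hN : 0 < N) (hm : 0 < m)
    (Ar : Matrix (Fin n) (Fin n) ℝ) (B : Matrix (Fin n) (Fin m) ℝ)
    (Lam Lhalf : Matrix (Fin m) (Fin m) ℝ) (R P : Matrix (Fin n) (Fin n) ℝ)
    (hAr : Hurwitz Ar)
    (hLam : Lam.PosDef) (hLamDiag : Lam.IsDiag)
    (hLhalfDiag : Lhalf.IsDiag) (hLhalfSq : Lhalf * Lhalf = Lam)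
    (hR : R.PosDef) (hP : P.PosDef)
    (hLyap : Arᵀ * P + P * Ar + R = 0)
    (γ κ η ξ : ℝ) (hγ : 0 < γ) (hκ : 0 < κ) (hη : 0 < η) (hξ0 : 0 < ξ) (hξ1 : ξ < 1)
    (σx : ℝ → Fin N → ℝ)
    (e eL xt : ℝ → Fin n → ℝ) (Wt : ℝ → Matrix (Fin N) (Fin m) ℝ)
    (heL0 : eL 0 = 0) (hxt0 : xt 0 = 0)
    (he : ∀ t ≥ (0:ℝ), HasDerivAt e
          (Ar *ᵥ e t - (B * Lam * (Wt t)ᵀ) *ᵥ σx t - κ • (e t - eL t)) t)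
    (hW : ∀ t ≥ (0:ℝ), ∀ i j, HasDerivAt (fun s => Wt s i j)
          (γ * (σx t i * ((e t) ᵥ* (P * B)) j)) t)
    (heL : ∀ t ≥ (0:ℝ), HasDerivAt eL (Ar *ᵥ eL t + η • (e t - eL t)) t)
    (hxt : ∀ t ≥ (0:ℝ), HasDerivAt xt (Ar *ᵥ xt t + κ • (e t - eL t)) t)
    : ∀ t ≥ (0:ℝ),
      HasDerivAt (fun s => Vstar γ κ η ξ P R hP.1 hR.1 Lhalf (e s) (Wt s) (eL s) (xt s))
        (-(e t ⬝ᵥ (R *ᵥ e t)) - η⁻¹ * κ * (eL t ⬝ᵥ (R *ᵥ eL t))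
          - 2 * ξ * κ⁻¹ * (lamMax hP.1)⁻¹ * lamMin hR.1 * (xt t ⬝ᵥ (R *ᵥ xt t))
          - 2 * κ * ((e t - eL t) ⬝ᵥ (P *ᵥ (e t - eL t)))
          + 4 * ξ * (lamMax hP.1)⁻¹ * lamMin hR.1 * (xt t ⬝ᵥ (P *ᵥ (e t - eL t)))) t :=
  statement4_general Ar B Lam Lhalf R P hLhalfDiag hLhalfSq hR hP hLyap γ κ η ξ hγ hκ hη σx e eL xt
    Wt he hW heL hxt
end
end
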